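/- arXiv:1106.5882 — 2 statements merged into one kernel-verified Lean document; each statement's English description precedes it below -/
import Mathlib

section
/- Let K(∂) be an ℓ×ℓ matrix differential operator over a differential field F, and define the F-bilinear pairing ⟨F|G⟩_K = Σ_{i,j} (λ+μ+∂)^{-1}(K_{ij}(μ) − K*_{ji}(λ)) evaluated with λ replaced by ∂ acting on F_i and μ by ∂ acting on G_j. Then for all F, G ∈ F^ℓ, ∂⟨F|G⟩_K = F·K(∂)G − G·K*(∂)F. -/
/-- Application of the matrix differential operator `K(∂) = Σ_{n≤N} K_n ∂^n` to a vector: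
`(K(∂)v)_i = Σ_{j,n} K_{ij;n} ∂^n v_j`. -/
def applyOp {F : Type} [Field F] (d : F → F) {ℓ N : ℕ}
    (K : Fin (N + 1) → Matrix (Fin ℓ) (Fin ℓ) F) (v : Fin ℓ → F) : Fin ℓ → F :=
  fun i => ∑ n : Fin (N + 1), ∑ j, K n i j * d^[(n : ℕ)] (v j)

/-- Application of the adjoint operator `K*(∂)`, `(K*(∂)v)_i = Σ_{j,n} (−∂)^n (K_{ji;n} v_j)`. -/
def applyAdj {F : Type} [Field F] (d : F → F) {ℓ N : ℕ}
    (K : Fin (N + 1) → Matrix (Fin ℓ) (Fin ℓ) F) (v : Fin ℓ → F) : Fin ℓ → F :=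
  fun i => ∑ n : Fin (N + 1), ∑ j, (-1 : F) ^ (n : ℕ) * d^[(n : ℕ)] (K n j i * v j)

/-- The pairing `⟨F|G⟩_K = Σ_{i,j} Σ_{n} Σ_{m<n} binom(n,m)(−∂)^{n−1−m}(F_i K_{ij;n} ∂^m G_j)`. -/
def pairingK {F : Type} [Field F] (d : F → F) {ℓ N : ℕ}
    (K : Fin (N + 1) → Matrix (Fin ℓ) (Fin ℓ) F) (Fv Gv : Fin ℓ → F) : F :=
  ∑ i, ∑ j, ∑ n : Fin (N + 1), ∑ m ∈ Finset.range (n : ℕ),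
    ((n : ℕ).choose m : F) * (-1 : F) ^ ((n : ℕ) - 1 - m) *
      d^[(n : ℕ) - 1 - m] (Fv i * K n i j * d^[m] (Gv j))

/-!
Write `P n a b` for the `(i, j, n)` summand of `⟨F|G⟩_K` with `a = F_i K_{ij;n}` and `b = G_j`.
Pascal's rule `C(n+1, m+1) = C(n, m) + C(n, m+1)` gives the recursion
`P (n+1) a b = a ∂ⁿb - ∂(P n a b) + P n a (∂b)`, and from it induction on `n` yields
`∂(P n a b) = a ∂ⁿb - ((-∂)ⁿa) b`. Summing over `i, j, n`, the first terms add up to `F·K(∂)G`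
and the second ones to `G·K*(∂)F`.
-/

open Finset

namespace Derivation

variable {R A : Type*} [CommRing R] [CommRing A] [Algebra R A] (D : Derivation R A A)

/-- `(λ + μ + ∂)⁻¹ (μ ^ n - (-λ - ∂) ^ n)`, with `λ` acting as `D` on `a` and `μ` on `b`. -/
def pairingKernel (n : ℕ) (a b : A) : A :=
  ∑ m ∈ range n, (n.choose m : A) * (-1) ^ (n - 1 - m) * (⇑D)^[n - 1 - m] (a * (⇑D)^[m] b)

theorem sum_choose_iterate_eq_sub_map_pairingKernel (n : ℕ) (a b : A) :
    ∑ m ∈ range (n + 1), (n.choose m : A) * (-1) ^ (n - m) * (⇑D)^[n - m] (a * (⇑D)^[m] b) =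
      a * (⇑D)^[n] b - D (D.pairingKernel n a b) := by
  rw [sum_range_succ, pairingKernel, map_sum, sub_eq_neg_add, ← sum_neg_distrib]
  simp only [Nat.choose_self, Nat.sub_self, pow_zero, Function.iterate_zero_apply,
    Nat.cast_one, one_mul]
  congr 1
  refine sum_congr rfl fun m hm => ?_
  have hnm : n - m = n - 1 - m + 1 := by grind
  have hcoeff : D ((n.choose m : A) * (-1) ^ (n - 1 - m)) = 0 := by simp
  rw [D.leibniz, hcoeff, smul_zero, add_zero, smul_eq_mul, hnm,
    Function.iterate_succ_apply', pow_succ]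
  ring

theorem pairingKernel_succ (n : ℕ) (a b : A) :
    D.pairingKernel (n + 1) a b =
      a * (⇑D)^[n] b - D (D.pairingKernel n a b) + D.pairingKernel n a (D b) := by
  rw [← sum_choose_iterate_eq_sub_map_pairingKernel, pairingKernel, pairingKernel, sum_range_succ',
    sum_range_succ' (fun m => _ * _ * _)]
  simp only [Nat.choose_succ_succ', Nat.cast_add, add_mul, sum_add_distrib, Nat.choose_zero_right,
    Nat.add_sub_cancel, Nat.sub_zero, Nat.sub_sub, Nat.add_comm 1,
    Function.iterate_succ_apply]
  abel

theorem map_pairingKernel (n : ℕ) (a b : A) :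
    D (D.pairingKernel n a b) = a * (⇑D)^[n] b - (-1) ^ n * (⇑D)^[n] a * b := by
  induction n generalizing b with
  | zero => simp [pairingKernel]
  | succ n ih =>
    rw [pairingKernel_succ, map_add, map_sub, ih, ih, Function.iterate_succ_apply',
      Function.iterate_succ_apply', (Function.Commute.iterate_self (⇑D) n).eq]
    simp only [map_sub, D.leibniz, D.leibniz_pow, D.map_neg, D.map_one_eq_zero, smul_eq_mul]
    ring

end Derivation

def Derivation.ofAddOfLeibniz {A : Type*} [CommRing A] (d : A → A)
    (hd_add : ∀ a b, d (a + b) = d a + d b) (hd_mul : ∀ a b, d (a * b) = d a * b + a * d b) :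
    Derivation ℤ A A :=
  Derivation.mk' (AddMonoidHom.mk' d hd_add).toIntLinearMap fun a b => by
    simp only [AddMonoidHom.coe_toIntLinearMap, AddMonoidHom.mk'_apply, hd_mul, smul_eq_mul]
    ring

section MatrixDifferentialOperator

variable {F : Type} [Field F] {ℓ N : ℕ}

theorem sum_mul_applyOp (d : F → F) (K : Fin (N + 1) → Matrix (Fin ℓ) (Fin ℓ) F)
    (Fv Gv : Fin ℓ → F) :
    ∑ i, Fv i * applyOp d K Gv i = ∑ i, ∑ j, ∑ n : Fin (N + 1), Fv i * K n i j * d^[n] (Gv j) := by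
  simp only [applyOp, mul_sum, mul_assoc]
  exact sum_congr rfl fun i _ => sum_comm

theorem sum_mul_applyAdj (d : F → F) (K : Fin (N + 1) → Matrix (Fin ℓ) (Fin ℓ) F)
    (Fv Gv : Fin ℓ → F) :
    ∑ j, Gv j * applyAdj d K Fv j =
      ∑ i, ∑ j, ∑ n : Fin (N + 1), (-1) ^ (n : ℕ) * d^[n] (Fv i * K n i j) * Gv j := by
  simp only [applyAdj, mul_sum, mul_comm (Fv _)]
  conv_rhs => rw [Finset.sum_comm]
  refine sum_congr rfl fun j _ => ?_
  rw [Finset.sum_comm]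
  simp only [mul_comm (Gv j)]

theorem Derivation.map_pairingK {R : Type*} [CommRing R] [Algebra R F] (D : Derivation R F F)
    (K : Fin (N + 1) → Matrix (Fin ℓ) (Fin ℓ) F) (Fv Gv : Fin ℓ → F) :
    D (pairingK D K Fv Gv) =
      (∑ i, Fv i * applyOp D K Gv i) - (∑ i, Gv i * applyAdj D K Fv i) := by
  have hK : pairingK D K Fv Gv =
      ∑ i, ∑ j, ∑ n : Fin (N + 1), D.pairingKernel n (Fv i * K n i j) (Gv j) := by
    simp only [pairingK, pairingKernel, mul_assoc]
  simp only [hK, map_sum, map_pairingKernel, sum_sub_distrib, sum_mul_applyOp, sum_mul_applyAdj]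

end MatrixDifferentialOperator

/-- for every `F, G ∈ F^ℓ`,
`∂⟨F|G⟩_K = F·K(∂)G − G·K*(∂)F`. -/
theorem stmt_6 {F : Type} [Field F] (d : F → F)
    (hd_add : ∀ a b, d (a + b) = d a + d b)
    (hd_mul : ∀ a b, d (a * b) = d a * b + a * d b)
    (ℓ N : ℕ)
    (K : Fin (N + 1) → Matrix (Fin ℓ) (Fin ℓ) F)
    (Fv Gv : Fin ℓ → F) :
    d (pairingK d K Fv Gv) =
      (∑ i, Fv i * applyOp d K Gv i) - (∑ i, Gv i * applyAdj d K Fv i) :=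
  (Derivation.ofAddOfLeibniz d hd_add hd_mul).map_pairingK K Fv Gv
end

section
/- If K(∂) is a skewadjoint ℓ×ℓ matrix differential operator over a differential field F with constants C, then for every F, G ∈ ker(K(∂)) ⊆ F^ℓ, the element ⟨F|G⟩_K lies in C. -/
/-- The coefficients of the adjoint operator `K*`. -/
def adjCoeff {F : Type} [Field F] (d : F → F) {ℓ N : ℕ}
    (K : Fin (N + 1) → Matrix (Fin ℓ) (Fin ℓ) F) :
    Fin (N + 1) → Matrix (Fin ℓ) (Fin ℓ) F :=
  fun m => Matrix.of fun i j =>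
    ∑ n : Fin (N + 1),
      if (m : ℕ) ≤ (n : ℕ) then
        ((n : ℕ).choose (m : ℕ) : F) * (-1 : F) ^ (n : ℕ) * d^[(n : ℕ) - (m : ℕ)] (K n j i)
      else 0

/-! The Leibniz rule and its adjoint form come from one computation on `A ⊗ A`: multiplication
`μ : A ⊗ A → A` intertwines `∂ ⊗ 1 + 1 ⊗ ∂` with `∂`, and `∂ ⊗ 1`, `1 ⊗ ∂` commute. Expanding
`(∂ ⊗ 1 + 1 ⊗ ∂)ⁿ` binomially gives Leibniz; expanding `(1 ⊗ ∂ - (∂ ⊗ 1 + 1 ⊗ ∂))ⁿ = (-∂ ⊗ 1)ⁿ`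
gives `∑ C(n,m) (-∂)^(n-m) (h ∂ᵐ g) = ((-∂)ⁿ h) g`, hence Lagrange's identity
`∂ (∑_{m<n} C(n,m) (-∂)^(n-1-m) (h ∂ᵐ g)) = h ∂ⁿ g - ((-∂)ⁿ h) g`.
Summed over the entries of `K`, this is `∂⟨F|G⟩_K = F · K(∂)G - G · K*(∂)F`, and with `K* = -K`
both terms vanish on `ker K(∂)`. -/

open TensorProduct Finset

lemma LinearMap.commute_rTensor_lTensor {R M : Type*} [CommSemiring R] [AddCommMonoid M]
    [Module R M] (f g : M →ₗ[R] M) : Commute (f.rTensor M) (g.lTensor M) :=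
  (LinearMap.rTensor_comp_lTensor _ f g).trans (LinearMap.lTensor_comp_rTensor _ f g).symm

namespace Derivation

def ofLeibniz {A : Type*} [CommRing A] (d : A → A) (hadd : ∀ a b, d (a + b) = d a + d b)
    (hmul : ∀ a b, d (a * b) = d a * b + a * d b) : Derivation ℤ A A :=
  Derivation.mk' (AddMonoidHom.mk' d hadd).toIntLinearMap fun a b => by
    simp only [AddMonoidHom.coe_toIntLinearMap, AddMonoidHom.mk'_apply, hmul, smul_eq_mul]
    ring

@[simp]
lemma coe_ofLeibniz {A : Type*} [CommRing A] (d : A → A) (hadd : ∀ a b, d (a + b) = d a + d b)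
    (hmul : ∀ a b, d (a * b) = d a * b + a * d b) : ⇑(ofLeibniz d hadd hmul) = d := rfl

section CommSemiring

variable {R A : Type*} [CommSemiring R] [CommSemiring A] [Algebra R A] (D : Derivation R A A)

lemma mul'_comp_rTensor_add_lTensor :
    LinearMap.mul' R A ∘ₗ ((D : A →ₗ[R] A).rTensor A + (D : A →ₗ[R] A).lTensor A)
      = (D : A →ₗ[R] A) ∘ₗ LinearMap.mul' R A := by
  ext a b
  simp only [AlgebraTensorModule.curry_apply, LinearMap.restrictScalars_self, curry_apply,
    LinearMap.coe_comp, Function.comp_apply, LinearMap.add_apply, LinearMap.rTensor_tmul,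
    coeFn_coe, LinearMap.lTensor_tmul, map_add, LinearMap.mul'_apply, D.leibniz, smul_eq_mul]
  ring

lemma mul'_iterate_rTensor_add_lTensor (n : ℕ) (t : A ⊗[R] A) :
    LinearMap.mul' R A ((⇑((D : A →ₗ[R] A).rTensor A + (D : A →ₗ[R] A).lTensor A))^[n] t)
      = D^[n] (LinearMap.mul' R A t) := by
  have h := Module.End.commute_pow_left_of_commute D.mul'_comp_rTensor_add_lTensor.symm n
  rw [← Module.End.pow_apply, ← LinearMap.comp_apply, ← h, LinearMap.comp_apply,
    Module.End.pow_apply, coeFn_coe]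

theorem iterate_map_mul (n : ℕ) (a b : A) :
    D^[n] (a * b) = ∑ m ∈ range (n + 1), (n.choose m : A) * (D^[m] a * D^[n - m] b) := by
  rw [← LinearMap.mul'_apply (R := R) (a := a), ← mul'_iterate_rTensor_add_lTensor,
    ← Module.End.pow_apply, (LinearMap.commute_rTensor_lTensor _ _).add_pow]
  simp only [LinearMap.sum_apply, map_sum, Module.End.mul_apply, Module.End.natCast_apply,
    map_nsmul, LinearMap.rTensor_pow, LinearMap.lTensor_pow, LinearMap.lTensor_tmul,
    LinearMap.rTensor_tmul, LinearMap.mul'_apply, Module.End.pow_apply, coeFn_coe]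
  simp only [nsmul_eq_mul]

end CommSemiring

section CommRing

variable {R A : Type*} [CommRing R] [CommRing A] [Algebra R A] (D : Derivation R A A)

theorem sum_choose_mul_neg_one_pow_iterate_mul (n : ℕ) (h g : A) :
    ∑ m ∈ range (n + 1), (n.choose m : A) * (-1) ^ (n - m) * D^[n - m] (h * D^[m] g)
      = (-1) ^ n * D^[n] h * g := by
  have hc : Commute ((D : A →ₗ[R] A).lTensor A)
      ((-1 : ℤ) • ((D : A →ₗ[R] A).rTensor A + (D : A →ₗ[R] A).lTensor A)) :=
    ((LinearMap.commute_rTensor_lTensor _ _).symm.add_right (Commute.refl _)).smul_right _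
  have hsum : (D : A →ₗ[R] A).lTensor A
      + (-1 : ℤ) • ((D : A →ₗ[R] A).rTensor A + (D : A →ₗ[R] A).lTensor A)
      = (-1 : ℤ) • (D : A →ₗ[R] A).rTensor A := by
    simp only [smul_add, neg_smul, one_smul]; abel
  have hexp := congr(LinearMap.mul' R A ((($hsum) ^ n) (h ⊗ₜ g)))
  rw [hc.add_pow, sum_congr rfl fun m _ => by rw [(hc.pow_pow m (n - m)).eq]] at hexp
  simp only [smul_pow, LinearMap.sum_apply, map_sum, Module.End.mul_apply,
    Module.End.natCast_apply, map_nsmul, LinearMap.smul_apply, map_zsmul,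
    mul'_iterate_rTensor_add_lTensor, LinearMap.rTensor_pow, LinearMap.lTensor_pow,
    LinearMap.lTensor_tmul, LinearMap.rTensor_tmul, LinearMap.mul'_apply, Module.End.pow_apply,
    coeFn_coe] at hexp
  simp only [nsmul_eq_mul, zsmul_eq_mul, Int.cast_pow, Int.cast_neg, Int.cast_one] at hexp
  simpa only [mul_assoc] using hexp

theorem lagrange_identity (n : ℕ) (h g : A) :
    D (∑ m ∈ range n, (n.choose m : A) * (-1) ^ (n - 1 - m) * D^[n - 1 - m] (h * D^[m] g))
      = h * D^[n] g - (-1) ^ n * D^[n] h * g := by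
  cases n with
  | zero => simp
  | succ n =>
    have hterm : ∀ m ∈ range (n + 1),
        D (((n + 1).choose m : A) * (-1) ^ (n + 1 - 1 - m) * D^[n + 1 - 1 - m] (h * D^[m] g))
          = -(((n + 1).choose m : A) * (-1) ^ (n + 1 - m) * D^[n + 1 - m] (h * D^[m] g)) := by
      intro m hm
      rw [show n + 1 - m = n + 1 - 1 - m + 1 by grind, pow_succ,
        Function.iterate_succ_apply']
      simp [D.leibniz, D.leibniz_pow]
    have hL := D.sum_choose_mul_neg_one_pow_iterate_mul (n + 1) h g
    rw [sum_range_succ] at hL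
    simp only [Nat.choose_self, Nat.cast_one, one_mul, Nat.sub_self, pow_zero,
      Function.iterate_zero, id_eq] at hL
    rw [map_sum, sum_congr rfl hterm, sum_neg_distrib]
    linear_combination -hL

end CommRing

end Derivation

lemma Fin.sum_ite_val_le {M : Type*} [AddCommMonoid M] {N : ℕ} (n : Fin (N + 1)) (f : ℕ → M) :
    ∑ m : Fin (N + 1), (if (m : ℕ) ≤ n then f m else 0) = ∑ m ∈ range (n + 1), f m := by
  rw [Fin.sum_univ_eq_sum_range (fun m => if m ≤ n then f m else 0), ← sum_filter]
  congr 1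
  ext m
  simp only [mem_filter, mem_range]
  omega

lemma applyOp_neg {F : Type} [Field F] (d : F → F) {ℓ N : ℕ}
    (K : Fin (N + 1) → Matrix (Fin ℓ) (Fin ℓ) F) (v : Fin ℓ → F) :
    applyOp d (-K) v = -applyOp d K v := by
  funext i
  simp [applyOp, sum_neg_distrib]

section MatrixDifferentialOperator

variable {R F : Type} [CommRing R] [Field F] [Algebra R F] (D : Derivation R F F) {ℓ N : ℕ}
  (K : Fin (N + 1) → Matrix (Fin ℓ) (Fin ℓ) F)

lemma applyOp_adjCoeff (v : Fin ℓ → F) (j : Fin ℓ) :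
    applyOp D (adjCoeff D K) v j
      = ∑ i, ∑ n : Fin (N + 1), (-1) ^ (n : ℕ) * D^[n] (v i * K n i j) := by
  simp only [applyOp, adjCoeff, Matrix.of_apply, D.iterate_map_mul, mul_sum, sum_mul,
    ← Fin.sum_ite_val_le]
  rw [sum_comm]
  refine sum_congr rfl fun i _ => ?_
  rw [sum_comm]
  refine sum_congr rfl fun n _ => sum_congr rfl fun m _ => ?_
  split_ifs <;> ring

theorem derivation_pairingK (Fv Gv : Fin ℓ → F) :
    D (pairingK D K Fv Gv)
      = ∑ i, Fv i * applyOp D K Gv i - ∑ j, applyOp D (adjCoeff D K) Fv j * Gv j := by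
  simp only [applyOp_adjCoeff]
  simp only [pairingK, map_sum, D.lagrange_identity, sum_sub_distrib, applyOp, mul_sum, sum_mul]
  congr 1
  · refine sum_congr rfl fun i _ => ?_
    rw [sum_comm]
    simp only [mul_assoc]
  · rw [sum_comm]

end MatrixDifferentialOperator

/-- if `K(∂)` is skewadjoint, then for every `F, G ∈ ker K(∂) ⊆ F^ℓ`
the element `⟨F|G⟩_K` is a constant, i.e. `d ⟨F|G⟩_K = 0`. -/
theorem stmt_8 {F : Type} [Field F] (d : F → F)
    (hd_add : ∀ a b, d (a + b) = d a + d b)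
    (hd_mul : ∀ a b, d (a * b) = d a * b + a * d b)
    (ℓ N : ℕ)
    (K : Fin (N + 1) → Matrix (Fin ℓ) (Fin ℓ) F)
    (hskew : ∀ n, adjCoeff d K n = -(K n))
    (Fv Gv : Fin ℓ → F)
    (hF : applyOp d K Fv = 0) (hG : applyOp d K Gv = 0) :
    d (pairingK d K Fv Gv) = 0 := by
  have hadj : applyOp d (adjCoeff d K) Fv = 0 := by
    rw [show adjCoeff d K = -K from funext hskew, applyOp_neg, hF, neg_zero]
  have h := derivation_pairingK (Derivation.ofLeibniz d hd_add hd_mul) K Fv Gv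
  rw [Derivation.coe_ofLeibniz] at h
  simp [h, hG, hadj]
end
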